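/- arXiv:1210.5650 — 6 statements merged into one kernel-verified Lean document; each statement's English description precedes it below -/
import Mathlib

section
/- Let X be a semisimplicial set satisfying the Kan condition. Then there exist functions T_j : X_n → X_{n+2}, defined for all n ≥ 0 and 0 ≤ j ≤ n, satisfying: (a) d_i ∘ T_j = T_{j-1} ∘ d_{i-1} whenever 0 < i < j+1; (b) d_i ∘ T_j = T_j ∘ d_{i-2} whenever i > j+2; (c) d_{j+1} ∘ T_j = d_{j+2} ∘ T_j for all j; and (d) d_0(d_{j+1}(T_j x)) = x for all j and all x. -/
/-- A semisimplicial set: a sequence of sets `X n` together with face maps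
`d i : X (n+1) → X n` (for `0 ≤ i ≤ n+1`) satisfying `d i ∘ d j = d (j-1) ∘ d i` for `i < j`. -/
structure SemisimplicialSet where
  X : ℕ → Type
  d : (n : ℕ) → ℕ → X (n + 1) → X n
  face_comm : ∀ (n i j : ℕ), i < j → j ≤ n + 2 → ∀ x : X (n + 2),
    d n i (d (n + 1) j x) = d n (j - 1) (d (n + 1) i x)

/-- The Kan condition: every consistent collection of `n+1` of the `n+2` faces of a
potential `(n+1)`-simplex (all except the `k`-th) can be filled. -/
def SemisimplicialSet.Kan (S : SemisimplicialSet) : Prop :=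
  (∀ k : ℕ, k ≤ 1 → ∀ x : ℕ → S.X 0,
      ∃ y : S.X 1, ∀ i : ℕ, i ≤ 1 → i ≠ k → S.d 0 i y = x i) ∧
  (∀ n k : ℕ, k ≤ n + 2 → ∀ x : ℕ → S.X (n + 1),
      (∀ i j : ℕ, i < j → j ≤ n + 2 → i ≠ k → j ≠ k →
        S.d n i (x j) = S.d n (j - 1) (x i)) →
      ∃ y : S.X (n + 2), ∀ i : ℕ, i ≤ n + 2 → i ≠ k → S.d (n + 1) i y = x i)

/-!
The operators are built by induction on the dimension. For `x ∈ X_{m+1}`, `T_j x` fills the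
horn `Λ^{m+3}_0` with faces `T_{j-1}(d_{i-1} x)` for `1 ≤ i ≤ j`, a simplex `V = mid` in
positions `j+1` and `j+2`, and `T_j(d_{i-2} x)` for `i ≥ j+3`; here `V` fills the horn
`Λ^{m+2}_{j+1}` with `d_0 V = x` and faces `d_{j'+1} T_{j'}(d_{i-1} x)` (`j' = j-1` below
position `j+1`, `j' = j` above it). Properties (a)–(d) of the new level hold by construction.
The compatibility of the faces of both horns uses, of the previous level, only (c), (d) and the
three identities `d_T_d_low`, `d_T_d_mid`, `d_T_d_high`. These follow from (a), (b) and the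
simplicial identities, but unlike (a), (b) they do not mention the level below, and in
dimension `0` they hold vacuously; so the induction only has to carry one level at a time.
-/

namespace SemisimplicialSet

variable {S : SemisimplicialSet}

theorem d_d_of_le (n i k : ℕ) (hik : i ≤ k) (hk : k ≤ n + 1) (x : S.X (n + 2)) :
    S.d n i (S.d (n + 1) (k + 1) x) = S.d n k (S.d (n + 1) i x) := by
  simpa using S.face_comm n i (k + 1) (by omega) (by omega) x

variable (S) in
def HornCompatible (n k : ℕ) (f : ℕ → S.X (n + 1)) : Prop :=
  ∀ i j, i < j → j ≤ n + 2 → i ≠ k → j ≠ k → S.d n i (f j) = S.d n (j - 1) (f i)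

theorem hornCompatible_zero_const (y : S.X 1) : S.HornCompatible 0 0 fun _ => y := by
  intro i j hij hj hi _
  obtain ⟨rfl, rfl⟩ : i = 1 ∧ j = 2 := by omega
  rfl

namespace Kan

noncomputable def fill (hK : S.Kan) {n k : ℕ} (hk : k ≤ n + 2) {f : ℕ → S.X (n + 1)}
    (hf : S.HornCompatible n k f) : S.X (n + 2) :=
  (hK.2 n k hk f hf).choose

theorem d_fill (hK : S.Kan) {n k : ℕ} (hk : k ≤ n + 2) {f : ℕ → S.X (n + 1)}
    (hf : S.HornCompatible n k f) {i : ℕ} (hi : i ≤ n + 2) (hik : i ≠ k) :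
    S.d (n + 1) i (hK.fill hk hf) = f i :=
  (hK.2 n k hk f hf).choose_spec i hi hik

theorem exists_d_zero_eq (hK : S.Kan) (x : S.X 0) : ∃ y : S.X 1, S.d 0 0 y = x :=
  (hK.1 1 le_rfl fun _ => x).imp fun _ hy => hy 0 (by omega) (by omega)

end Kan

structure TOperators (S : SemisimplicialSet) (m : ℕ) where
  T : ℕ → S.X m → S.X (m + 2)
  d_succ_eq : ∀ j ≤ m, ∀ x, S.d (m + 1) (j + 1) (T j x) = S.d (m + 1) (j + 2) (T j x)
  d_zero_d_succ : ∀ j ≤ m, ∀ x, S.d m 0 (S.d (m + 1) (j + 1) (T j x)) = x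
  d_T_d_low : ∀ i k j, i < k → k ≤ j → j ≤ m → ∀ x : S.X (m + 1),
    S.d (m + 1) (i + 1) (T j (S.d m k x)) = S.d (m + 1) k (T j (S.d m i x))
  d_T_d_mid : ∀ i j k, i ≤ j → j + 2 ≤ k → k ≤ m + 1 → ∀ x : S.X (m + 1),
    S.d (m + 1) (i + 1) (T (j + 1) (S.d m k x)) = S.d (m + 1) (k + 1) (T j (S.d m i x))
  d_T_d_high : ∀ i k j, j < i → i < k → k ≤ m + 1 → ∀ x : S.X (m + 1),
    S.d (m + 1) (i + 2) (T j (S.d m k x)) = S.d (m + 1) (k + 1) (T j (S.d m i x))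

namespace TOperators

noncomputable def zero (hK : S.Kan) : S.TOperators 0 where
  T _ x := hK.fill (Nat.zero_le 2) (hornCompatible_zero_const (hK.exists_d_zero_eq x).choose)
  d_succ_eq j hj x := by
    obtain rfl : j = 0 := by omega
    rw [hK.d_fill _ _ (by omega) (by omega), hK.d_fill _ _ (by omega) (by omega)]
  d_zero_d_succ j hj x := by
    obtain rfl : j = 0 := by omega
    rw [hK.d_fill _ _ (by omega) (by omega)]
    exact (hK.exists_d_zero_eq x).choose_spec
  d_T_d_low _ _ _ _ _ _ := by omega
  d_T_d_mid _ _ _ _ _ _ := by omega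
  d_T_d_high _ _ _ _ _ _ := by omega

variable {m : ℕ} (U : S.TOperators m) (hK : S.Kan)

def midFaces (j : ℕ) (x : S.X (m + 1)) : ℕ → S.X (m + 1)
  | 0 => x
  | i + 1 => if i < j then S.d (m + 1) j (U.T (j - 1) (S.d m i x))
      else S.d (m + 1) (j + 1) (U.T j (S.d m i x))

theorem midFaces_zero (j : ℕ) (x : S.X (m + 1)) : U.midFaces j x 0 = x := rfl

theorem midFaces_succ_of_lt {i j : ℕ} (h : i < j + 1) (x : S.X (m + 1)) :
    U.midFaces (j + 1) x (i + 1) = S.d (m + 1) (j + 1) (U.T j (S.d m i x)) := by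
  simp [midFaces, h]

theorem midFaces_succ_of_le {i j : ℕ} (h : j ≤ i) (x : S.X (m + 1)) :
    U.midFaces j x (i + 1) = S.d (m + 1) (j + 1) (U.T j (S.d m i x)) := by
  simp [midFaces, not_lt.2 h]

theorem midFaces_compatible {j : ℕ} (hj : j ≤ m + 1) (x : S.X (m + 1)) :
    S.HornCompatible m (j + 1) (U.midFaces j x) := by
  rintro (_ | a) (_ | b) hab hb ha hbj
  · omega
  · rcases Nat.lt_or_ge b j with hbj' | hjb
    · obtain ⟨j, rfl⟩ : ∃ j', j = j' + 1 := ⟨j - 1, by omega⟩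
      rw [U.midFaces_succ_of_lt hbj']
      exact U.d_zero_d_succ j (by omega) _
    · rw [U.midFaces_succ_of_le hjb]
      exact U.d_zero_d_succ j (by omega) _
  · omega
  simp only [Nat.add_sub_cancel]
  rcases Nat.lt_or_ge b j with hbj' | hjb
  · obtain ⟨j, rfl⟩ : ∃ j', j = j' + 1 := ⟨j - 1, by omega⟩
    rw [U.midFaces_succ_of_lt hbj', U.midFaces_succ_of_lt (by omega), d_d_of_le m (a + 1) j
      (by omega) (by omega), U.d_T_d_low a b j (by omega) (by omega) (by omega),
      d_d_of_le m b j (by omega) (by omega)]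
  rw [U.midFaces_succ_of_le hjb]
  rcases Nat.lt_or_ge a j with haj | hja
  · obtain ⟨j, rfl⟩ : ∃ j', j = j' + 1 := ⟨j - 1, by omega⟩
    rw [U.midFaces_succ_of_lt haj, d_d_of_le m (a + 1) (j + 1) (by omega) (by omega),
      U.d_T_d_mid a j b (by omega) (by omega) (by omega), d_d_of_le m (j + 1) b (by omega)
      (by omega)]
  · rw [U.midFaces_succ_of_le hja, ← d_d_of_le m (j + 1) (a + 1) (by omega) (by omega),
      U.d_T_d_high a b j (by omega) (by omega) (by omega), d_d_of_le m (j + 1) b (by omega)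
      (by omega)]

noncomputable def mid {j : ℕ} (hj : j ≤ m + 1) (x : S.X (m + 1)) : S.X (m + 2) :=
  hK.fill (by omega) (U.midFaces_compatible hj x)

theorem d_mid {j : ℕ} (hj : j ≤ m + 1) (x : S.X (m + 1)) {i : ℕ} (hi : i ≤ m + 2)
    (hij : i ≠ j + 1) : S.d (m + 1) i (U.mid hK hj x) = U.midFaces j x i :=
  hK.d_fill _ _ hi hij

noncomputable def succFaces {j : ℕ} (hj : j ≤ m + 1) (x : S.X (m + 1)) : ℕ → S.X (m + 2)
  | 0 => U.mid hK hj x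
  | i + 1 => if i < j then U.T (j - 1) (S.d m i x)
      else if i < j + 2 then U.mid hK hj x else U.T j (S.d m (i - 1) x)

theorem succFaces_succ_of_lt {i j : ℕ} (hj : j + 1 ≤ m + 1) (h : i < j + 1)
    (x : S.X (m + 1)) : U.succFaces hK hj x (i + 1) = U.T j (S.d m i x) := by
  simp [succFaces, h]

theorem succFaces_succ_of_le_of_lt {i j : ℕ} (hj : j ≤ m + 1) (h₁ : j ≤ i)
    (h₂ : i < j + 2) (x : S.X (m + 1)) : U.succFaces hK hj x (i + 1) = U.mid hK hj x := by
  simp [succFaces, not_lt.2 h₁, h₂]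

theorem succFaces_add_two_of_lt {i j : ℕ} (hj : j ≤ m + 1) (h : j < i) (x : S.X (m + 1)) :
    U.succFaces hK hj x (i + 2) = U.T j (S.d m i x) := by
  simp [succFaces, show ¬i + 1 < j by omega, show ¬i + 1 < j + 2 by omega]

theorem succFaces_compatible {j : ℕ} (hj : j ≤ m + 1) (x : S.X (m + 1)) :
    S.HornCompatible (m + 1) 0 (U.succFaces hK hj x) := by
  rintro (_ | a) (_ | b) hab hb ha hb0
  iterate 3 omega
  simp only [Nat.add_sub_cancel]
  rcases Nat.lt_or_ge b j with hbj | hjb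
  · obtain ⟨j, rfl⟩ : ∃ j', j = j' + 1 := ⟨j - 1, by omega⟩
    rw [U.succFaces_succ_of_lt hK hj hbj, U.succFaces_succ_of_lt hK hj (by omega)]
    exact U.d_T_d_low a b j (by omega) (by omega) (by omega) x
  rcases Nat.lt_or_ge a j with haj | hja
  · obtain ⟨j, rfl⟩ : ∃ j', j = j' + 1 := ⟨j - 1, by omega⟩
    rw [U.succFaces_succ_of_lt hK hj haj]
    rcases Nat.lt_or_ge b (j + 3) with hbj' | hjb'
    · rw [U.succFaces_succ_of_le_of_lt hK hj hjb hbj', U.d_mid hK hj x (by omega) (by omega),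
        U.midFaces_succ_of_lt (by omega)]
      rcases (by omega : b = j + 1 ∨ b = j + 2) with rfl | rfl
      · rfl
      · exact U.d_succ_eq j (by omega) _
    · obtain ⟨c, rfl⟩ : ∃ c, b = c + 1 := ⟨b - 1, by omega⟩
      rw [U.succFaces_add_two_of_lt hK hj (by omega)]
      exact U.d_T_d_mid a j c (by omega) (by omega) (by omega) x
  rcases Nat.lt_or_ge a (j + 2) with haj | hja'
  · rw [U.succFaces_succ_of_le_of_lt hK hj hja haj]
    rcases Nat.lt_or_ge b (j + 2) with hbj | hjb'
    · obtain ⟨rfl, rfl⟩ : a = j ∧ b = j + 1 := by omega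
      rw [U.succFaces_succ_of_le_of_lt hK hj hjb hbj]
    · obtain ⟨c, rfl⟩ : ∃ c, b = c + 1 := ⟨b - 1, by omega⟩
      rw [U.succFaces_add_two_of_lt hK hj (by omega), U.d_mid hK hj x (by omega) (by omega),
        U.midFaces_succ_of_le (by omega)]
      rcases (by omega : a = j ∨ a = j + 1) with rfl | rfl
      · rfl
      · exact (U.d_succ_eq j (by omega) _).symm
  · obtain ⟨a, rfl⟩ : ∃ a', a = a' + 1 := ⟨a - 1, by omega⟩
    obtain ⟨c, rfl⟩ : ∃ c, b = c + 1 := ⟨b - 1, by omega⟩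
    rw [U.succFaces_add_two_of_lt hK hj (by omega), U.succFaces_add_two_of_lt hK hj (by omega)]
    exact U.d_T_d_high a c j (by omega) (by omega) (by omega) x

noncomputable def succT (j : ℕ) (x : S.X (m + 1)) : S.X (m + 3) :=
  if hj : j ≤ m + 1 then hK.fill (Nat.zero_le _) (U.succFaces_compatible hK hj x)
  else hK.fill (Nat.zero_le _) (U.succFaces_compatible hK le_rfl x)

theorem d_succT {j : ℕ} (hj : j ≤ m + 1) (x : S.X (m + 1)) {i : ℕ} (hi : i ≤ m + 3)
    (hi0 : i ≠ 0) : S.d (m + 2) i (U.succT hK j x) = U.succFaces hK hj x i := by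
  rw [succT, dif_pos hj]
  exact hK.d_fill _ _ hi hi0

theorem d_succT_of_lt {i j : ℕ} (hi : 0 < i) (hij : i < j + 1) (hj : j ≤ m + 1)
    (x : S.X (m + 1)) : S.d (m + 2) i (U.succT hK j x) = U.T (j - 1) (S.d m (i - 1) x) := by
  obtain ⟨i, rfl⟩ : ∃ i', i = i' + 1 := ⟨i - 1, by omega⟩
  obtain ⟨j, rfl⟩ : ∃ j', j = j' + 1 := ⟨j - 1, by omega⟩
  rw [U.d_succT hK hj x (by omega) (by omega), U.succFaces_succ_of_lt hK hj (by omega)]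
  simp

theorem d_succT_of_gt {i j : ℕ} (hij : j + 2 < i) (hi : i ≤ m + 3) (x : S.X (m + 1)) :
    S.d (m + 2) i (U.succT hK j x) = U.T j (S.d m (i - 2) x) := by
  obtain ⟨i, rfl⟩ : ∃ i', i = i' + 2 := ⟨i - 2, by omega⟩
  rw [U.d_succT hK (by omega) x hi (by omega), U.succFaces_add_two_of_lt hK _ (by omega)]
  simp

theorem d_succT_succ_eq {j : ℕ} (hj : j ≤ m + 1) (x : S.X (m + 1)) :
    S.d (m + 2) (j + 1) (U.succT hK j x) = S.d (m + 2) (j + 2) (U.succT hK j x) := by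
  rw [U.d_succT hK hj x (by omega) (by omega), U.d_succT hK hj x (by omega) (by omega),
    U.succFaces_succ_of_le_of_lt hK hj le_rfl (by omega),
    U.succFaces_succ_of_le_of_lt hK hj (by omega) (by omega)]

theorem d_zero_d_succT {j : ℕ} (hj : j ≤ m + 1) (x : S.X (m + 1)) :
    S.d (m + 1) 0 (S.d (m + 2) (j + 1) (U.succT hK j x)) = x := by
  rw [U.d_succT hK hj x (by omega) (by omega), U.succFaces_succ_of_le_of_lt hK hj le_rfl
    (by omega), U.d_mid hK hj x (by omega) (by omega), midFaces_zero]

noncomputable def succ : S.TOperators (m + 1) where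
  T := U.succT hK
  d_succ_eq _ hj := U.d_succT_succ_eq hK hj
  d_zero_d_succ _ hj := U.d_zero_d_succT hK hj
  d_T_d_low i k j hik hkj hj x := by
    rw [U.d_succT_of_lt hK (by omega) (by omega) hj, U.d_succT_of_lt hK (by omega) (by omega) hj,
      Nat.add_sub_cancel, S.face_comm m i k hik (by omega) x]
  d_T_d_mid i j k hij hjk hk x := by
    rw [U.d_succT_of_lt hK (by omega) (by omega) (by omega), U.d_succT_of_gt hK (by omega)
      (by omega), Nat.add_sub_cancel, Nat.add_sub_cancel, show k + 1 - 2 = k - 1 by omega,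
      S.face_comm m i k (by omega) (by omega) x]
  d_T_d_high i k j hji hik hk x := by
    rw [U.d_succT_of_gt hK (by omega) (by omega), U.d_succT_of_gt hK (by omega) (by omega),
      Nat.add_sub_cancel, show k + 1 - 2 = k - 1 by omega, S.face_comm m i k hik (by omega) x]

end TOperators

noncomputable def Kan.tOperators (hK : S.Kan) : (m : ℕ) → S.TOperators m
  | 0 => .zero hK
  | m + 1 => (hK.tOperators m).succ hK

end SemisimplicialSet

/-- A semisimplicial set satisfying the Kan condition admits operators
`T j : X n → X (n+2)` (for `0 ≤ j ≤ n`) satisfying properties (a)–(d). -/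
theorem kan_semisimplicial_has_T (S : SemisimplicialSet) (hK : S.Kan) :
    ∃ T : (n : ℕ) → ℕ → S.X n → S.X (n + 2),
      (∀ (n i j : ℕ), 0 < i → i < j + 1 → j ≤ n + 1 → ∀ x : S.X (n + 1),
          S.d (n + 2) i (T (n + 1) j x) = T n (j - 1) (S.d n (i - 1) x)) ∧
      (∀ (n i j : ℕ), j + 2 < i → i ≤ n + 3 → ∀ x : S.X (n + 1),
          S.d (n + 2) i (T (n + 1) j x) = T n j (S.d n (i - 2) x)) ∧
      (∀ (n j : ℕ), j ≤ n → ∀ x : S.X n,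
          S.d (n + 1) (j + 1) (T n j x) = S.d (n + 1) (j + 2) (T n j x)) ∧
      (∀ (n j : ℕ), j ≤ n → ∀ x : S.X n,
          S.d n 0 (S.d (n + 1) (j + 1) (T n j x)) = x) := by
  exact ⟨fun n => (hK.tOperators n).T, fun n _ _ => (hK.tOperators n).d_succT_of_lt hK,
    fun n _ _ => (hK.tOperators n).d_succT_of_gt hK, fun n => (hK.tOperators n).d_succ_eq,
    fun n => (hK.tOperators n).d_zero_d_succ⟩
end

section
/- Let X be a semisimplicial set equipped with functions T_j : X_n → X_{n+2} (for all n ≥ 0 and 0 ≤ j ≤ n) satisfying: (a) d_i ∘ T_j = T_{j-1} ∘ d_{i-1} whenever 0 < i < j+1; (b) d_i ∘ T_j = T_j ∘ d_{i-2} whenever i > j+2; (c) d_{j+1} ∘ T_j = d_{j+2} ∘ T_j; and (d) d_0(d_{j+1}(T_j x)) = x for all j and x. Fix x ∈ X_n and 0 ≤ k ≤ n, and for each j with 0 ≤ j ≤ n+1 and j ≠ k+1 define y_j ∈ X_n by: y_0 = x; y_j = d_k(T_{k-1}(d_{j-1} x)) if 0 < j < k+1; and y_j = d_{k+1}(T_k(d_{j-1}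 x)) if j > k+1. Then d_i y_j = d_{j-1} y_i whenever i < j with i ≠ k+1 and j ≠ k+1. -/
/-- Properties (a)–(d) of the auxiliary operators `T_j : X n → X (n+2)`. -/
def Tprops (S : SemisimplicialSet) (T : (n : ℕ) → ℕ → S.X n → S.X (n + 2)) : Prop :=
  (∀ (n i j : ℕ), 0 < i → i < j + 1 → j ≤ n + 1 → ∀ x : S.X (n + 1),
      S.d (n + 2) i (T (n + 1) j x) = T n (j - 1) (S.d n (i - 1) x)) ∧
  (∀ (n i j : ℕ), j + 2 < i → i ≤ n + 3 → ∀ x : S.X (n + 1),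
      S.d (n + 2) i (T (n + 1) j x) = T n j (S.d n (i - 2) x)) ∧
  (∀ (n j : ℕ), j ≤ n → ∀ x : S.X n,
      S.d (n + 1) (j + 1) (T n j x) = S.d (n + 1) (j + 2) (T n j x)) ∧
  (∀ (n j : ℕ), j ≤ n → ∀ x : S.X n,
      S.d n 0 (S.d (n + 1) (j + 1) (T n j x)) = x)

/-!
With `hornFace k z = d_{k+1} (T_k z)` we have `y_j = hornFace (k-1) (d_{j-1} x)` for `0 < j ≤ k`
and `y_j = hornFace k (d_{j-1} x)` for `j > k+1`. By (d), `d_0 y_j = d_{j-1} x`. For `i > 0`, one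
face relation followed by (a) (if `i ≤ k`) or (b) (if `i > k+1`) moves `d_i` inside `hornFace` as
`d_{i-1}`, so `d_i y_j` and `d_{j-1} y_i` are the same `hornFace` applied to the two sides of
`d_{i-1} d_{j-1} x = d_{j-2} d_{i-1} x`.
-/

def hornFace (S : SemisimplicialSet) (T : (n : ℕ) → ℕ → S.X n → S.X (n + 2)) (n k : ℕ)
    (z : S.X n) : S.X (n + 1) :=
  S.d (n + 1) (k + 1) (T n k z)

namespace Tprops

variable {S : SemisimplicialSet} {T : (n : ℕ) → ℕ → S.X n → S.X (n + 2)}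

theorem face_zero_hornFace (hT : Tprops S T) {n k : ℕ} (hk : k ≤ n) (z : S.X n) :
    S.d n 0 (hornFace S T n k z) = z :=
  hT.2.2.2 n k hk z

theorem face_hornFace_of_le (hT : Tprops S T) {m i k : ℕ} (hi : 0 < i) (hik : i ≤ k)
    (hk : k ≤ m + 1) (z : S.X (m + 1)) :
    S.d (m + 1) i (hornFace S T (m + 1) k z) = hornFace S T m (k - 1) (S.d m (i - 1) z) := by
  obtain ⟨k, rfl⟩ : ∃ l, k = l + 1 := ⟨k - 1, by omega⟩
  rw [hornFace, S.face_comm (m + 1) i (k + 2) (by omega) (by omega),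
    hT.1 m i (k + 1) hi (by omega) hk]
  rfl

theorem face_hornFace_of_gt (hT : Tprops S T) {m i k : ℕ} (hki : k + 1 < i) (hi : i ≤ m + 2)
    (z : S.X (m + 1)) :
    S.d (m + 1) i (hornFace S T (m + 1) k z) = hornFace S T m k (S.d m (i - 1) z) := by
  have hcomm := S.face_comm (m + 1) (k + 1) (i + 1) (by omega) (by omega) (T (m + 1) k z)
  rw [Nat.add_sub_cancel] at hcomm
  rw [hornFace, ← hcomm, hT.2.1 m (i + 1) k (by omega) (by omega), Nat.add_sub_add_right i 1 1]
  rfl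

end Tprops

/-- Lemma 4 of the paper: the prescribed faces `y j` of the first auxiliary horn
are Kan-compatible. -/
theorem first_horn_compatible (S : SemisimplicialSet)
    (T : (n : ℕ) → ℕ → S.X n → S.X (n + 2)) (hT : Tprops S T)
    (n k : ℕ) (hk : k ≤ n + 1) (x : S.X (n + 1))
    (y : ℕ → S.X (n + 1))
    (hy0 : y 0 = x)
    (hyl : ∀ j : ℕ, 0 < j → j < k + 1 →
        y j = S.d (n + 1) k (T n (k - 1) (S.d n (j - 1) x)))
    (hyh : ∀ j : ℕ, k + 1 < j → j ≤ n + 2 →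
        y j = S.d (n + 1) (k + 1) (T n k (S.d n (j - 1) x))) :
    ∀ i j : ℕ, i < j → j ≤ n + 2 → i ≠ k + 1 → j ≠ k + 1 →
      S.d n i (y j) = S.d n (j - 1) (y i) := by
  have hyl' : ∀ j, 0 < j → j < k + 1 → y j = hornFace S T n (k - 1) (S.d n (j - 1) x) := by
    intro j hj hjk
    rw [hyl j hj hjk, hornFace, Nat.sub_add_cancel (by omega)]
  intro i j hij hj hik hjk
  rcases Nat.eq_zero_or_pos i with rfl | hi
  · rw [hy0]
    rcases lt_or_gt_of_ne hjk with hjk | hjk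
    · rw [hyl' j hij hjk, hT.face_zero_hornFace (by omega)]
    · rw [hyh j hjk hj, ← hornFace, hT.face_zero_hornFace (by omega)]
  obtain ⟨m, rfl⟩ : ∃ m, n = m + 1 := ⟨n - 1, by omega⟩
  have hface := S.face_comm m (i - 1) (j - 1) (by omega) (by omega) x
  rcases lt_or_gt_of_ne hjk with hjk | hjk
  · rw [hyl' j (by omega) hjk, hyl' i hi (by omega),
      hT.face_hornFace_of_le hi (by omega) (by omega),
      hT.face_hornFace_of_le (by omega) (by omega) (by omega), hface]
  rw [hyh j hjk hj, ← hornFace]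
  rcases lt_or_gt_of_ne hik with hik | hik
  · rw [hyl' i hi hik, hT.face_hornFace_of_le hi (by omega) (by omega),
      hT.face_hornFace_of_gt (by omega) (by omega), hface]
  · rw [hyh i hik (by omega), ← hornFace, hT.face_hornFace_of_gt hik (by omega),
      hT.face_hornFace_of_gt (by omega) (by omega), hface]
end

section
/- Let X be a semisimplicial set equipped with functions T_j : X_n → X_{n+2} (for all n ≥ 0 and 0 ≤ j ≤ n) satisfying: (a) d_i ∘ T_j = T_{j-1} ∘ d_{i-1} whenever 0 < i < j+1; (b) d_i ∘ T_j = T_j ∘ d_{i-2} whenever i > j+2; (c) d_{j+1} ∘ T_j = d_{j+2} ∘ T_j; and (d) d_0(d_{j+1}(T_j x)) = x for all j and x. Fix x ∈ X_n and 0 ≤ k ≤ n, let y_j (for 0 ≤ j ≤ n+1, j ≠ k+1) be defined by y_0 = x, y_j = d_k(T_{k-1}(d_{j-1} x)) for 0 < j < k+1, and y_j = d_{k+1}(T_k(d_{j-1} x)) for j > k+1, and let y ∈ X_{n+1} satisfy d_j y = y_j for all j ≠ k+1. For each j with 0 < j ≤ n+2 define z_j ∈ X_{n+1} by: z_j = T_{k-1}(d_{j-1}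 x) if 0 < j < k+1; z_j = y if j = k+1 or j = k+2; and z_j = T_k(d_{j-2} x) if j > k+2. Then d_i z_j = d_{j-1} z_i whenever 0 < i < j. -/
/-!
Each identity `d_i z_j = d_{j-1} z_i` is settled by where `i` and `j` lie relative to `k+1, k+2`.
When `z_i` or `z_j` is `y`, it is one of the prescribed faces of `y`, possibly after identity (c).
When both are values of `T` on faces of `x`, properties (a) and (b) move the outer face past `T`,
and the two sides become `T` applied to the two sides of a face identity of `X`.
-/

namespace Tprops

variable {S : SemisimplicialSet} {T : (n : ℕ) → ℕ → S.X n → S.X (n + 2)}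

theorem face_T_face_comm_low (hT : Tprops S T) {n l i j : ℕ} (hi : 0 < i) (hij : i < j)
    (hjl : j ≤ l + 1) (hl : l ≤ n) (x : S.X (n + 1)) :
    S.d (n + 1) i (T n l (S.d n (j - 1) x)) = S.d (n + 1) (j - 1) (T n l (S.d n (i - 1) x)) := by
  obtain ⟨m, rfl⟩ : ∃ m, n = m + 1 := ⟨n - 1, by omega⟩
  change S.d (m + 2) i _ = S.d (m + 2) (j - 1) _
  rw [hT.1 m i l hi (by omega) (by omega), hT.1 m (j - 1) l (by omega) (by omega) (by omega),
    S.face_comm m (i - 1) (j - 1) (by omega) (by omega)]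

theorem face_T_face_comm_mixed (hT : Tprops S T) {n k i j : ℕ} (hi : 0 < i) (hik : i ≤ k)
    (hkj : k + 2 < j) (hj : j ≤ n + 3) (x : S.X (n + 1)) :
    S.d (n + 1) i (T n k (S.d n (j - 2) x)) =
      S.d (n + 1) (j - 1) (T n (k - 1) (S.d n (i - 1) x)) := by
  obtain ⟨m, rfl⟩ : ∃ m, n = m + 1 := ⟨n - 1, by omega⟩
  change S.d (m + 2) i _ = S.d (m + 2) (j - 1) _
  rw [hT.1 m i k hi (by omega) (by omega), hT.2.1 m (j - 1) (k - 1) (by omega) (by omega),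
    show j - 1 - 2 = j - 2 - 1 by omega, S.face_comm m (i - 1) (j - 2) (by omega) (by omega)]

theorem face_T_face_comm_high (hT : Tprops S T) {n k i j : ℕ} (hki : k + 2 < i) (hij : i < j)
    (hj : j ≤ n + 3) (x : S.X (n + 1)) :
    S.d (n + 1) i (T n k (S.d n (j - 2) x)) = S.d (n + 1) (j - 1) (T n k (S.d n (i - 2) x)) := by
  obtain ⟨m, rfl⟩ : ∃ m, n = m + 1 := ⟨n - 1, by omega⟩
  change S.d (m + 2) i _ = S.d (m + 2) (j - 1) _
  rw [hT.2.1 m i k (by omega) (by omega), hT.2.1 m (j - 1) k (by omega) (by omega),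
    show j - 1 - 2 = j - 2 - 1 by omega, S.face_comm m (i - 2) (j - 2) (by omega) (by omega)]

end Tprops

theorem second_horn_compatible_general (S : SemisimplicialSet)
    (T : (n : ℕ) → ℕ → S.X n → S.X (n + 2)) (hT : Tprops S T)
    (n k : ℕ) (hk : k ≤ n + 1) (x : S.X (n + 1))
    (y : S.X (n + 2))
    (hyl : ∀ j : ℕ, 0 < j → j < k + 1 →
        S.d (n + 1) j y = S.d (n + 1) k (T n (k - 1) (S.d n (j - 1) x)))
    (hyh : ∀ j : ℕ, k + 1 < j → j ≤ n + 2 →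
        S.d (n + 1) j y = S.d (n + 1) (k + 1) (T n k (S.d n (j - 1) x)))
    (z : ℕ → S.X (n + 2))
    (hzl : ∀ j : ℕ, 0 < j → j < k + 1 → z j = T n (k - 1) (S.d n (j - 1) x))
    (hzm1 : z (k + 1) = y) (hzm2 : z (k + 2) = y)
    (hzh : ∀ j : ℕ, k + 2 < j → j ≤ n + 3 → z j = T n k (S.d n (j - 2) x)) :
    ∀ i j : ℕ, 0 < i → i < j → j ≤ n + 3 →
      S.d (n + 1) i (z j) = S.d (n + 1) (j - 1) (z i) := by
  intro i j hi hij hj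
  obtain hjl | rfl | rfl | hjh : j ≤ k ∨ j = k + 1 ∨ j = k + 2 ∨ k + 2 < j := by omega
  · rw [hzl j (by omega) (by omega), hzl i hi (by omega)]
    exact hT.face_T_face_comm_low hi hij (by omega) (by omega) x
  · rw [hzm1, hzl i hi (by omega)]
    exact hyl i hi (by omega)
  · obtain hik | rfl : i ≤ k ∨ i = k + 1 := by omega
    · obtain ⟨l, rfl⟩ : ∃ l, k = l + 1 := ⟨k - 1, by omega⟩
      rw [hzm2, hzl i hi (by omega), hyl i hi (by omega)]
      exact hT.2.2.1 n l (by omega) _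
    · rw [hzm1, hzm2]
      rfl
  · rw [hzh j hjh hj]
    obtain hik | rfl | rfl | hih : i ≤ k ∨ i = k + 1 ∨ i = k + 2 ∨ k + 2 < i := by omega
    · rw [hzl i hi (by omega)]
      exact hT.face_T_face_comm_mixed hi hik hjh hj x
    · rw [hzm1, hyh (j - 1) (by omega) (by omega), Nat.sub_sub]
    · rw [hzm2, hyh (j - 1) (by omega) (by omega), Nat.sub_sub]
      exact (hT.2.2.1 n k (by omega) _).symm
    · rw [hzh i hih (by omega)]
      exact hT.face_T_face_comm_high hih hij hj x

/-- Lemma 5 of the paper: the prescribed faces `z j` of the second auxiliary horn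
are Kan-compatible. -/
theorem second_horn_compatible (S : SemisimplicialSet)
    (T : (n : ℕ) → ℕ → S.X n → S.X (n + 2)) (hT : Tprops S T)
    (n k : ℕ) (hk : k ≤ n + 1) (x : S.X (n + 1))
    (y : S.X (n + 2))
    (hy0 : S.d (n + 1) 0 y = x)
    (hyl : ∀ j : ℕ, 0 < j → j < k + 1 →
        S.d (n + 1) j y = S.d (n + 1) k (T n (k - 1) (S.d n (j - 1) x)))
    (hyh : ∀ j : ℕ, k + 1 < j → j ≤ n + 2 →
        S.d (n + 1) j y = S.d (n + 1) (k + 1) (T n k (S.d n (j - 1) x)))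
    (z : ℕ → S.X (n + 2))
    (hzl : ∀ j : ℕ, 0 < j → j < k + 1 → z j = T n (k - 1) (S.d n (j - 1) x))
    (hzm1 : z (k + 1) = y) (hzm2 : z (k + 2) = y)
    (hzh : ∀ j : ℕ, k + 2 < j → j ≤ n + 3 → z j = T n k (S.d n (j - 2) x)) :
    ∀ i j : ℕ, 0 < i → i < j → j ≤ n + 3 →
      S.d (n + 1) i (z j) = S.d (n + 1) (j - 1) (z i) :=
  second_horn_compatible_general S T hT n k hk x y hyl hyh z hzl hzm1 hzm2 hzh
end

section
/- Let X be a semisimplicial set equipped with functions T_j : X_n → X_{n+2} (for all n ≥ 0 and 0 ≤ j ≤ n) satisfying: (a) d_i ∘ T_j = T_{j-1} ∘ d_{i-1} whenever 0 < i < j+1; (b) d_i ∘ T_j = T_j ∘ d_{i-2} whenever i > j+2; (c) d_{j+1} ∘ T_j = d_{j+2} ∘ T_j; and (d) d_0(d_{j+1}(T_j x)) = x for all j and x. Define s_j : X_n → X_{n+1} by s_j x = d_0(T_j x). Then the functions s_j satisfy: (i) d_i ∘ s_j = s_{j-1} ∘ d_i whenever i < j; (ii) d_i(s_j x) = x whenever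 i = j or i = j+1; and (iii) d_i ∘ s_j = s_j ∘ d_{i-1} whenever i > j+1. -/
namespace SemisimplicialSet

theorem d_d_zero (S : SemisimplicialSet) {n i : ℕ} (hi : i ≤ n + 1) (x : S.X (n + 2)) :
    S.d n i (S.d (n + 1) 0 x) = S.d n 0 (S.d (n + 1) (i + 1) x) :=
  (S.face_comm n 0 (i + 1) i.succ_pos (by omega) x).symm

end SemisimplicialSet

namespace Tprops

variable {S : SemisimplicialSet} {T : (n : ℕ) → ℕ → S.X n → S.X (n + 2)}

theorem d_d_zero_T_of_lt (hT : Tprops S T) {n i j : ℕ} (hij : i < j) (hj : j ≤ n + 1)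
    (x : S.X (n + 1)) :
    S.d (n + 1) i (S.d (n + 2) 0 (T (n + 1) j x)) = S.d (n + 1) 0 (T n (j - 1) (S.d n i x)) := by
  rw [S.d_d_zero (by omega), hT.1 n (i + 1) j i.succ_pos (by omega) hj, Nat.add_sub_cancel]

theorem d_d_zero_T_self (hT : Tprops S T) {n j : ℕ} (hj : j ≤ n) (x : S.X n) :
    S.d n j (S.d (n + 1) 0 (T n j x)) = x := by
  rw [S.d_d_zero (by omega), hT.2.2.2 n j hj]

theorem d_d_zero_T_succ (hT : Tprops S T) {n j : ℕ} (hj : j ≤ n) (x : S.X n) :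
    S.d n (j + 1) (S.d (n + 1) 0 (T n j x)) = x := by
  rw [S.d_d_zero (by omega), ← hT.2.2.1 n j hj, hT.2.2.2 n j hj]

theorem d_d_zero_T_of_gt (hT : Tprops S T) {n i j : ℕ} (hij : j + 1 < i) (hi : i ≤ n + 2)
    (x : S.X (n + 1)) :
    S.d (n + 1) i (S.d (n + 2) 0 (T (n + 1) j x)) = S.d (n + 1) 0 (T n j (S.d n (i - 1) x)) := by
  rw [S.d_d_zero (by omega), hT.2.1 n (i + 1) j (by omega) (by omega), Nat.add_sub_add_right]

end Tprops

/-- Defining `s j x = d 0 (T j x)` from operators `T` with properties (a)–(d)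
yields operators satisfying the simplicial identities (i)–(iii). -/
theorem degeneracies_from_T (S : SemisimplicialSet)
    (T : (n : ℕ) → ℕ → S.X n → S.X (n + 2)) (hT : Tprops S T)
    (s : (n : ℕ) → ℕ → S.X n → S.X (n + 1))
    (hs : ∀ (n j : ℕ), j ≤ n → ∀ x : S.X n, s n j x = S.d (n + 1) 0 (T n j x)) :
    (∀ (n i j : ℕ), i < j → j ≤ n + 1 → ∀ x : S.X (n + 1),
        S.d (n + 1) i (s (n + 1) j x) = s n (j - 1) (S.d n i x)) ∧
    (∀ (n j : ℕ), j ≤ n → ∀ x : S.X n,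
        S.d n j (s n j x) = x ∧ S.d n (j + 1) (s n j x) = x) ∧
    (∀ (n i j : ℕ), j + 1 < i → i ≤ n + 2 → ∀ x : S.X (n + 1),
        S.d (n + 1) i (s (n + 1) j x) = s n j (S.d n (i - 1) x)) := by
  refine ⟨fun n i j hij hj x => ?_, fun n j hj x => ?_, fun n i j hij hi x => ?_⟩
  · rw [hs _ _ hj, hs _ _ (by omega)]
    exact hT.d_d_zero_T_of_lt hij hj x
  · rw [hs _ _ hj]
    exact ⟨hT.d_d_zero_T_self hj x, hT.d_d_zero_T_succ hj x⟩
  · rw [hs _ _ (by omega), hs _ _ (by omega)]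
    exact hT.d_d_zero_T_of_gt hij hi x
end

section
/- Let ℓ ≥ 1 and let X be an ℓ-fold multisemisimplicial set equipped with functions T^q_j : X_𝐧 → X_{𝐧+2𝐞_q} (for all multi-indices 𝐧, 1 ≤ q ≤ ℓ, 0 ≤ j ≤ n_q) satisfying: (a) d^q_i ∘ T^q_j = T^q_{j-1} ∘ d^q_{i-1} whenever 0 < i < j+1; (b) d^q_i ∘ T^q_j = T^q_j ∘ d^q_{i-2} whenever i > j+2; (c) d^q_{j+1} ∘ T^q_j = d^q_{j+2} ∘ T^q_j; (d) d^q_0(d^q_{j+1}(T^q_j x)) = x; and (e) d^p_i ∘ T^q_j = T^q_j ∘ d^p_i whenever p ≠ q. Define s^q_j : X_𝐧 → X_{𝐧+𝐞_q} by s^q_j x = d^q_0(T^q_j x). Then: (i) d^q_i ∘ s^q_j = s^q_{j-1} ∘ d^q_i whenever i < j; (ii) d^q_i(s^q_j x) = x whenever i = j or i = j+1; (iii) d^q_i ∘ s^q_j = s^q_j ∘ d^q_{i-1} whenever i > j+1; and (iv) d^p_i ∘ s^q_j = s^q_j ∘ d^p_i whenever p ≠ q. -/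
/-- The multi-index with `1` in position `p` and `0` elsewhere. -/
def uv {ℓ : ℕ} (p : Fin ℓ) : Fin ℓ → ℕ := Pi.single p 1

lemma uv_apply {ℓ : ℕ} (p t : Fin ℓ) : uv p t = if t = p then 1 else 0 := by
  simp [uv, Pi.single_apply]

lemma sub_sub_comm' {ℓ : ℕ} (m a b : Fin ℓ → ℕ) : m - a - b = m - b - a := by
  funext t; simp only [Pi.sub_apply]; omega

lemma sub_sub_sub_comm' {ℓ : ℕ} (m a b : Fin ℓ → ℕ) : m - a - a - b = m - b - a - a := by
  funext t; simp only [Pi.sub_apply]; omega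

lemma addsub1 {ℓ : ℕ} (m : Fin ℓ → ℕ) (r q : Fin ℓ) (h : q ≠ r) :
    (m - uv r) - uv q = ((m + uv r) - uv q) - uv r - uv r := by
  funext t
  simp only [Pi.sub_apply, Pi.add_apply, uv_apply]
  by_cases h1 : t = r <;> by_cases h2 : t = q <;> simp_all <;> omega

lemma addsub2 {ℓ : ℕ} (m : Fin ℓ → ℕ) (r q : Fin ℓ) (h : q ≠ r) :
    ((m + uv r) - uv q) - uv r = m - uv q := by
  funext t
  simp only [Pi.sub_apply, Pi.add_apply, uv_apply]
  by_cases h1 : t = r <;> by_cases h2 : t = q <;> simp_all <;> omega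

/-- An `ℓ`-fold multisemisimplicial set: sets `X 𝐧` indexed by multi-indices,
with face maps `d m p i : X m → X (m - 𝐞 p)` (meaningful for `1 ≤ m p` and
`0 ≤ i ≤ m p`) satisfying the semisimplicial identities. -/
structure MultiSemisimplicialSet (ℓ : ℕ) where
  X : (Fin ℓ → ℕ) → Type
  d : (m : Fin ℓ → ℕ) → (p : Fin ℓ) → ℕ → X m → X (m - uv p)
  face_comm_same : ∀ (m : Fin ℓ → ℕ) (p : Fin ℓ) (i j : ℕ), i < j → j ≤ m p → 2 ≤ m p →
    ∀ x : X m, d (m - uv p) p i (d m p j x) = d (m - uv p) p (j - 1) (d m p i x)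
  face_comm_mixed : ∀ (m : Fin ℓ → ℕ) (p q : Fin ℓ), p ≠ q →
    ∀ i j : ℕ, 1 ≤ m p → 1 ≤ m q → i ≤ m p → j ≤ m q → ∀ x : X m,
      d (m - uv q) p i (d m q j x) =
        cast (congrArg X (sub_sub_comm' m (uv p) (uv q))) (d (m - uv p) q j (d m p i x))

/-- The Kan condition for multisemisimplicial sets: every compatible family of
faces of a potential filler of degree `m`, given for all valid `(p, i) ≠ (r, k)`,
can be filled. -/
def MultiSemisimplicialSet.Kan {ℓ : ℕ} (S : MultiSemisimplicialSet ℓ) : Prop :=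
  ∀ (m : Fin ℓ → ℕ) (r : Fin ℓ) (k : ℕ), 1 ≤ m r → k ≤ m r →
    ∀ x : (p : Fin ℓ) → ℕ → S.X (m - uv p),
      (∀ (p : Fin ℓ) (i j : ℕ), i < j → j ≤ m p → 2 ≤ m p →
          ¬(p = r ∧ i = k) → ¬(p = r ∧ j = k) →
          S.d (m - uv p) p i (x p j) = S.d (m - uv p) p (j - 1) (x p i)) →
      (∀ (p q : Fin ℓ) (i j : ℕ), p ≠ q → 1 ≤ m p → 1 ≤ m q → i ≤ m p → j ≤ m q →
          ¬(p = r ∧ i = k) → ¬(q = r ∧ j = k) →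
          S.d (m - uv q) p i (x q j) =
            cast (congrArg S.X (sub_sub_comm' m (uv p) (uv q))) (S.d (m - uv p) q j (x p i))) →
      ∃ z : S.X m, ∀ (p : Fin ℓ) (i : ℕ), 1 ≤ m p → i ≤ m p → ¬(p = r ∧ i = k) →
        S.d m p i z = x p i

/-- Properties (a)–(e) of the auxiliary operators `T m q j : X (𝐧) → X (𝐧 + 2𝐞 q)`
(written with top degree `m = 𝐧 + 2𝐞 q`). -/
def MTprops {ℓ : ℕ} (S : MultiSemisimplicialSet ℓ)
    (T : (m : Fin ℓ → ℕ) → (q : Fin ℓ) → ℕ → S.X ((m - uv q) - uv q) → S.X m) : Prop :=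
  (∀ (m : Fin ℓ → ℕ) (q : Fin ℓ) (i j : ℕ), 0 < i → i < j + 1 → j + 2 ≤ m q →
      ∀ x : S.X ((m - uv q) - uv q),
        S.d m q i (T m q j x) =
          T (m - uv q) q (j - 1) (S.d ((m - uv q) - uv q) q (i - 1) x)) ∧
  (∀ (m : Fin ℓ → ℕ) (q : Fin ℓ) (i j : ℕ), j + 2 < i → i ≤ m q →
      ∀ x : S.X ((m - uv q) - uv q),
        S.d m q i (T m q j x) = T (m - uv q) q j (S.d ((m - uv q) - uv q) q (i - 2) x)) ∧
  (∀ (m : Fin ℓ → ℕ) (q : Fin ℓ) (j : ℕ), j + 2 ≤ m q → ∀ x : S.X ((m - uv q) - uv q),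
      S.d m q (j + 1) (T m q j x) = S.d m q (j + 2) (T m q j x)) ∧
  (∀ (m : Fin ℓ → ℕ) (q : Fin ℓ) (j : ℕ), j + 2 ≤ m q → ∀ x : S.X ((m - uv q) - uv q),
      S.d (m - uv q) q 0 (S.d m q (j + 1) (T m q j x)) = x) ∧
  (∀ (m : Fin ℓ → ℕ) (p q : Fin ℓ) (i j : ℕ), p ≠ q → 1 ≤ m p → i ≤ m p → j + 2 ≤ m q →
      ∀ x : S.X ((m - uv q) - uv q),
        S.d m p i (T m q j x) =
          T (m - uv p) q j
            (cast (congrArg S.X (sub_sub_sub_comm' m (uv q) (uv p)))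
              (S.d ((m - uv q) - uv q) p i x)))


/-!
Every identity for `s q j = d q 0 ∘ T q j` follows one pattern: a face identity moves the face
past the outer `d q 0` onto `T q j` (raising its index by one when it is a `q`-face), a property of
`T` pushes it through `T`, and the result is again of the form `d q 0 ∘ T`. The cases `i = j, j + 1`
instead reduce, via (c), to (d): `d q 0 ∘ d q (j+1) ∘ T q j = id`.
-/

lemma sub_uv_apply_self {ℓ : ℕ} (m : Fin ℓ → ℕ) (q : Fin ℓ) : (m - uv q) q = m q - 1 := by
  simp [uv]

lemma sub_uv_apply_of_ne {ℓ : ℕ} (m : Fin ℓ → ℕ) {p q : Fin ℓ} (h : p ≠ q) :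
    (m - uv q) p = m p := by
  simp [uv, h]

lemma exists_sub_uv_eq {ℓ : ℕ} (m : Fin ℓ → ℕ) (q : Fin ℓ) : ∃ M, M - uv q = m ∧ 1 ≤ M q :=
  ⟨m + uv q, add_tsub_cancel_right _ _, by simp [uv]⟩

lemma cast_apply_cast_of_eq {α : Type*} {P Q : α → Type} (f : ∀ a, P a → Q a) {A B : α}
    (h : A = B) {C : Type} (hA : C = P A) (hB : C = P B) (hQ : Q A = Q B) (c : C) :
    cast hQ (f A (cast hA c)) = f B (cast hB c) := by
  subst h; rfl

namespace MTprops

variable {ℓ : ℕ} {S : MultiSemisimplicialSet ℓ}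
  {T : (m : Fin ℓ → ℕ) → (q : Fin ℓ) → ℕ → S.X ((m - uv q) - uv q) → S.X m}
  {s : (m : Fin ℓ → ℕ) → (q : Fin ℓ) → ℕ → S.X (m - uv q) → S.X m}
  (hT : MTprops S T)
  (hs : ∀ (m : Fin ℓ → ℕ) (q : Fin ℓ) (j : ℕ), j + 2 ≤ m q →
    ∀ x : S.X ((m - uv q) - uv q), s (m - uv q) q j x = S.d m q 0 (T m q j x))
include hT hs

/-! In the lemmas below `M = 𝐧 + 2𝐞_q` is the top degree of `T q j`, so `s q j` lands in
`X (M - 𝐞_q)`. -/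

lemma d_s_of_lt (M : Fin ℓ → ℕ) (q : Fin ℓ) {i j : ℕ} (hij : i < j)
    (hj : j + 2 ≤ M q) (x : S.X ((M - uv q) - uv q)) :
    S.d (M - uv q) q i (s (M - uv q) q j x) =
      s ((M - uv q) - uv q) q (j - 1) (S.d ((M - uv q) - uv q) q i x) := by
  have hswap := S.face_comm_same M q 0 (i + 1) i.succ_pos (by omega) (by omega) (T M q j x)
  rw [Nat.add_sub_cancel] at hswap
  rw [hs M q j hj, ← hswap, hT.1 M q (i + 1) j i.succ_pos (by omega) hj, Nat.add_sub_cancel,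
    hs (M - uv q) q (j - 1) (by rw [sub_uv_apply_self]; omega)]

lemma d_s_self (M : Fin ℓ → ℕ) (q : Fin ℓ) {j : ℕ} (hj : j + 2 ≤ M q)
    (x : S.X ((M - uv q) - uv q)) : S.d (M - uv q) q j (s (M - uv q) q j x) = x := by
  have hswap := S.face_comm_same M q 0 (j + 1) j.succ_pos (by omega) (by omega) (T M q j x)
  rw [Nat.add_sub_cancel] at hswap
  rw [hs M q j hj, ← hswap, hT.2.2.2.1 M q j hj x]

lemma d_s_succ (M : Fin ℓ → ℕ) (q : Fin ℓ) {j : ℕ} (hj : j + 2 ≤ M q)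
    (x : S.X ((M - uv q) - uv q)) : S.d (M - uv q) q (j + 1) (s (M - uv q) q j x) = x := by
  have hswap := S.face_comm_same M q 0 (j + 2) (by omega) hj (by omega) (T M q j x)
  rw [show j + 2 - 1 = j + 1 by omega] at hswap
  rw [hs M q j hj, ← hswap, ← hT.2.2.1 M q j hj x, hT.2.2.2.1 M q j hj x]

lemma d_s_of_succ_lt (M : Fin ℓ → ℕ) (q : Fin ℓ) {i j : ℕ} (hij : j + 1 < i)
    (hi : i + 1 ≤ M q) (x : S.X ((M - uv q) - uv q)) :
    S.d (M - uv q) q i (s (M - uv q) q j x) =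
      s ((M - uv q) - uv q) q j (S.d ((M - uv q) - uv q) q (i - 1) x) := by
  have hswap := S.face_comm_same M q 0 (i + 1) i.succ_pos hi (by omega) (T M q j x)
  rw [Nat.add_sub_cancel] at hswap
  rw [hs M q j (by omega), ← hswap, hT.2.1 M q (i + 1) j (by omega) hi,
    show i + 1 - 2 = i - 1 by omega, hs (M - uv q) q j (by rw [sub_uv_apply_self]; omega)]

lemma d_s_of_ne (M : Fin ℓ → ℕ) {p q : Fin ℓ} (hpq : p ≠ q) {i j : ℕ}
    (hp : 1 ≤ M p) (hi : i ≤ M p) (hj : j + 2 ≤ M q) (x : S.X ((M - uv q) - uv q)) :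
    S.d (M - uv q) p i (s (M - uv q) q j x) =
      s ((M - uv q) - uv p) q j
        (cast (congrArg S.X (sub_sub_comm' (M - uv q) (uv q) (uv p)))
          (S.d ((M - uv q) - uv q) p i x)) := by
  rw [hs M q j hj, S.face_comm_mixed M p q hpq i 0 hp (by omega) hi (by omega),
    hT.2.2.2.2 M p q i j hpq hp hi hj,
    ← hs (M - uv p) q j (by rw [sub_uv_apply_of_ne _ hpq.symm]; omega)]
  exact cast_apply_cast_of_eq (P := fun a => S.X (a - uv q)) (s · q j)
    (sub_sub_comm' M (uv p) (uv q)) _ _ _ _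

end MTprops

theorem multi_degeneracies_from_T_general (ℓ : ℕ)
    (S : MultiSemisimplicialSet ℓ)
    (T : (m : Fin ℓ → ℕ) → (q : Fin ℓ) → ℕ → S.X ((m - uv q) - uv q) → S.X m)
    (hT : MTprops S T)
    (s : (m : Fin ℓ → ℕ) → (q : Fin ℓ) → ℕ → S.X (m - uv q) → S.X m)
    (hs : ∀ (m : Fin ℓ → ℕ) (q : Fin ℓ) (j : ℕ), j + 2 ≤ m q →
        ∀ x : S.X ((m - uv q) - uv q), s (m - uv q) q j x = S.d m q 0 (T m q j x)) :
    (∀ (m : Fin ℓ → ℕ) (q : Fin ℓ) (i j : ℕ), i < j → j + 1 ≤ m q →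
      ∀ x : S.X (m - uv q),
        S.d m q i (s m q j x) = s (m - uv q) q (j - 1) (S.d (m - uv q) q i x)) ∧
    (∀ (m : Fin ℓ → ℕ) (q : Fin ℓ) (j : ℕ), j + 1 ≤ m q → ∀ x : S.X (m - uv q),
        S.d m q j (s m q j x) = x ∧ S.d m q (j + 1) (s m q j x) = x) ∧
    (∀ (m : Fin ℓ → ℕ) (q : Fin ℓ) (i j : ℕ), j + 1 < i → i ≤ m q →
      ∀ x : S.X (m - uv q),
        S.d m q i (s m q j x) = s (m - uv q) q j (S.d (m - uv q) q (i - 1) x)) ∧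
    (∀ (m : Fin ℓ → ℕ) (p q : Fin ℓ) (i j : ℕ), p ≠ q → 1 ≤ m p → i ≤ m p → j + 1 ≤ m q →
      ∀ x : S.X (m - uv q),
        S.d m p i (s m q j x) =
          s (m - uv p) q j
            (cast (congrArg S.X (sub_sub_comm' m (uv q) (uv p))) (S.d (m - uv q) p i x))) := by
  refine ⟨?_, ?_, ?_, ?_⟩
  · intro m q i j hij hj x
    obtain ⟨M, rfl, hM⟩ := exists_sub_uv_eq m q
    exact hT.d_s_of_lt hs M q hij (by rw [sub_uv_apply_self] at hj; omega) x
  · intro m q j hj x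
    obtain ⟨M, rfl, hM⟩ := exists_sub_uv_eq m q
    have hj' : j + 2 ≤ M q := by rw [sub_uv_apply_self] at hj; omega
    exact ⟨hT.d_s_self hs M q hj' x, hT.d_s_succ hs M q hj' x⟩
  · intro m q i j hij hi x
    obtain ⟨M, rfl, hM⟩ := exists_sub_uv_eq m q
    exact hT.d_s_of_succ_lt hs M q hij (by rw [sub_uv_apply_self] at hi; omega) x
  · intro m p q i j hpq hp hi hj x
    obtain ⟨M, rfl, hM⟩ := exists_sub_uv_eq m q
    simp only [sub_uv_apply_of_ne M hpq] at hp hi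
    exact hT.d_s_of_ne hs M hpq hp hi (by rw [sub_uv_apply_self] at hj; omega) x

/-- Defining `s q j x = d q 0 (T q j x)` from operators `T` with properties (a)–(e)
yields operators satisfying identities (i)–(iii) and the mixed face identity. -/
theorem multi_degeneracies_from_T (ℓ : ℕ) (hl : 1 ≤ ℓ)
    (S : MultiSemisimplicialSet ℓ)
    (T : (m : Fin ℓ → ℕ) → (q : Fin ℓ) → ℕ → S.X ((m - uv q) - uv q) → S.X m)
    (hT : MTprops S T)
    (s : (m : Fin ℓ → ℕ) → (q : Fin ℓ) → ℕ → S.X (m - uv q) → S.X m)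
    (hs : ∀ (m : Fin ℓ → ℕ) (q : Fin ℓ) (j : ℕ), j + 2 ≤ m q →
        ∀ x : S.X ((m - uv q) - uv q), s (m - uv q) q j x = S.d m q 0 (T m q j x)) :
    (∀ (m : Fin ℓ → ℕ) (q : Fin ℓ) (i j : ℕ), i < j → j + 1 ≤ m q →
      ∀ x : S.X (m - uv q),
        S.d m q i (s m q j x) = s (m - uv q) q (j - 1) (S.d (m - uv q) q i x)) ∧
    (∀ (m : Fin ℓ → ℕ) (q : Fin ℓ) (j : ℕ), j + 1 ≤ m q → ∀ x : S.X (m - uv q),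
        S.d m q j (s m q j x) = x ∧ S.d m q (j + 1) (s m q j x) = x) ∧
    (∀ (m : Fin ℓ → ℕ) (q : Fin ℓ) (i j : ℕ), j + 1 < i → i ≤ m q →
      ∀ x : S.X (m - uv q),
        S.d m q i (s m q j x) = s (m - uv q) q j (S.d (m - uv q) q (i - 1) x)) ∧
    (∀ (m : Fin ℓ → ℕ) (p q : Fin ℓ) (i j : ℕ), p ≠ q → 1 ≤ m p → i ≤ m p → j + 1 ≤ m q →
      ∀ x : S.X (m - uv q),
        S.d m p i (s m q j x) =
          s (m - uv p) q j
            (cast (congrArg S.X (sub_sub_comm' m (uv q) (uv p))) (S.d (m - uv q) p i x))) :=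
  multi_degeneracies_from_T_general ℓ S T hT s hs
end

section
/- Let ℓ ≥ 1 and let X be an ℓ-fold multisemisimplicial set equipped with functions T^q_j : X_𝐧 → X_{𝐧+2𝐞_q} (for all multi-indices 𝐧, 1 ≤ q ≤ ℓ, 0 ≤ j ≤ n_q) satisfying: (a) d^q_i ∘ T^q_j = T^q_{j-1} ∘ d^q_{i-1} whenever 0 < i < j+1; (b) d^q_i ∘ T^q_j = T^q_j ∘ d^q_{i-2} whenever i > j+2; (c) d^q_{j+1} ∘ T^q_j = d^q_{j+2} ∘ T^q_j; (d) d^q_0(d^q_{j+1}(T^q_j x)) = x; and (e) d^p_i ∘ T^q_j = T^q_j ∘ d^p_i whenever p ≠ q. Fix x ∈ X_𝐧, an index r with 1 ≤ r ≤ ℓ, and k with 0 ≤ k ≤ n_r. For each pair (q,j) ≠ (r,k+1) with 0 ≤ j ≤ n_q + (1 if q = r else 0), define y^q_j by: y^r_0 = x; y^r_j = d^r_k(T^r_{k-1}(d^r_{j-1} x)) if 0 < j < k+1; y^r_j = d^r_{k+1}(T^r_k(d^r_{j-1} x)) if j > k+1; and y^q_j = d^r_{k+1}(T^r_k(d^q_j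 x)) if q ≠ r. Then the family (y^q_j) satisfies the Kan compatibility relations: d^q_i y^q_j = d^q_{j-1} y^q_i for i < j with (q,i) ≠ (r,k+1) ≠ (q,j), and d^p_i y^q_j = d^q_j y^p_i for p ≠ q with (p,i) ≠ (r,k+1) ≠ (q,j). -/
/-!
The horn is the boundary of a single simplex: all the prescribed faces `y q j` are faces of
`z = d^r_{k+1}(T^r_k x)`, an element of degree `𝐧 + 𝐞_r`. Indeed (d) gives `d^r_0 z = x`, the
semisimplicial identities move `d^r_j` past `d^r_{k+1}` and then (a), (b) or (e) move it past
`T^r_k`, which yields exactly the prescribed `y^q_j`. Faces of one element are compatible.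
-/

section

variable {ℓ : ℕ}

lemma add_uv_apply_self (m : Fin ℓ → ℕ) (r : Fin ℓ) : (m + uv r) r = m r + 1 := by
  simp [uv_apply]

lemma add_uv_apply_of_ne (m : Fin ℓ → ℕ) {q r : Fin ℓ} (h : q ≠ r) : (m + uv r) q = m q := by
  simp [uv_apply, h]

lemma add_uv_sub_uv (m : Fin ℓ → ℕ) (r : Fin ℓ) : m + uv r - uv r = m := by
  funext t; simp

end

namespace MultiSemisimplicialSet

variable {ℓ : ℕ}

def IsCompatibleFamily (S : MultiSemisimplicialSet ℓ) (m : Fin ℓ → ℕ) (r : Fin ℓ) (k : ℕ)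
    (y : (q : Fin ℓ) → ℕ → S.X (m - uv q)) : Prop :=
  (∀ (p : Fin ℓ) (i j : ℕ), i < j → j ≤ m p → 2 ≤ m p →
      ¬(p = r ∧ i = k) → ¬(p = r ∧ j = k) →
      S.d (m - uv p) p i (y p j) = S.d (m - uv p) p (j - 1) (y p i)) ∧
  (∀ (p q : Fin ℓ) (i j : ℕ), p ≠ q → 1 ≤ m p → 1 ≤ m q → i ≤ m p → j ≤ m q →
      ¬(p = r ∧ i = k) → ¬(q = r ∧ j = k) →
      S.d (m - uv q) p i (y q j) =
        cast (congrArg S.X (sub_sub_comm' m (uv p) (uv q))) (S.d (m - uv p) q j (y p i)))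

variable (S : MultiSemisimplicialSet ℓ)

lemma isCompatibleFamily_of_eq_faces {m : Fin ℓ → ℕ} (r : Fin ℓ) (k : ℕ) (z : S.X m)
    {y : (q : Fin ℓ) → ℕ → S.X (m - uv q)}
    (hy : ∀ q j, 1 ≤ m q → j ≤ m q → ¬(q = r ∧ j = k) → y q j = S.d m q j z) :
    S.IsCompatibleFamily m r k y := by
  constructor
  · intro p i j hij hj h2 hi hj'
    rw [hy p j (by omega) hj hj', hy p i (by omega) (by omega) hi]
    exact S.face_comm_same m p i j hij hj h2 z
  · intro p q i j hpq hp hq hi hj hi' hj'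
    rw [hy q j hq hj hj', hy p i hp hi hi']
    exact S.face_comm_mixed m p q hpq i j hp hq hi hj z

variable (T : (m : Fin ℓ → ℕ) → (q : Fin ℓ) → ℕ → S.X ((m - uv q) - uv q) → S.X m)

/-- `d^r_{k+1}(T^r_k x)` has degree `M - 𝐞_r`, which for `M = m + 𝐞_r` is `m` only
propositionally; hence the transport along `h`. -/
def firstHornFiller (r : Fin ℓ) (k : ℕ) {M N : Fin ℓ → ℕ} (h : M - uv r = N)
    (x : S.X (N - uv r)) : S.X N :=
  cast (congrArg S.X h)
    (S.d M r (k + 1) (T M r k (cast (congrArg (fun n => S.X (n - uv r)) h.symm) x)))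

end MultiSemisimplicialSet

namespace MTprops

variable {ℓ : ℕ} {S : MultiSemisimplicialSet ℓ}
  {T : (m : Fin ℓ → ℕ) → (q : Fin ℓ) → ℕ → S.X ((m - uv q) - uv q) → S.X m}
  {r : Fin ℓ} {k : ℕ} {M N : Fin ℓ → ℕ} {h : M - uv r = N} {x : S.X (N - uv r)}

lemma firstHornFiller_face_zero (hT : MTprops S T) (hk : k + 2 ≤ M r) :
    S.d N r 0 (S.firstHornFiller T r k h x) = x := by
  obtain ⟨-, -, -, hd, -⟩ := hT
  subst h
  simpa only [MultiSemisimplicialSet.firstHornFiller, cast_eq] using hd M r k hk x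

lemma firstHornFiller_face_of_lt (hT : MTprops S T) {j : ℕ} (hj0 : 0 < j) (hjk : j < k + 1)
    (hk : k + 2 ≤ M r) :
    S.d N r j (S.firstHornFiller T r k h x) =
      S.d N r k (T N r (k - 1) (S.d (N - uv r) r (j - 1) x)) := by
  obtain ⟨ha, -, -, -, -⟩ := hT
  subst h
  simp only [MultiSemisimplicialSet.firstHornFiller, cast_eq]
  rw [S.face_comm_same M r j (k + 1) hjk (by omega) (by omega), ha M r j k hj0 hjk hk,
    Nat.add_sub_cancel]

lemma firstHornFiller_face_of_gt (hT : MTprops S T) {j : ℕ} (hkj : k + 1 < j)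
    (hj : j + 1 ≤ M r) :
    S.d N r j (S.firstHornFiller T r k h x) =
      S.d N r (k + 1) (T N r k (S.d (N - uv r) r (j - 1) x)) := by
  obtain ⟨-, hb, -, -, -⟩ := hT
  subst h
  simp only [MultiSemisimplicialSet.firstHornFiller, cast_eq]
  have hcomm := S.face_comm_same M r (k + 1) (j + 1) (by omega) hj (by omega) (T M r k x)
  rw [Nat.add_sub_cancel] at hcomm
  rw [← hcomm, hb M r (j + 1) k (by omega) hj, show j + 1 - 2 = j - 1 by omega]

lemma firstHornFiller_face_of_ne (hT : MTprops S T) {q : Fin ℓ} {j : ℕ}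
    (hqr : q ≠ r) (hq : 1 ≤ M q) (hj : j ≤ M q) (hk : k + 2 ≤ M r)
    (h₁ : N - uv r - uv q = M - uv q - uv r - uv r) (h₂ : M - uv q - uv r = N - uv q) :
    S.d N q j (S.firstHornFiller T r k h x) =
      cast (congrArg S.X h₂)
        (S.d (M - uv q) r (k + 1)
          (T (M - uv q) r k (cast (congrArg S.X h₁) (S.d (N - uv r) q j x)))) := by
  obtain ⟨-, -, -, -, he⟩ := hT
  subst h
  simp only [MultiSemisimplicialSet.firstHornFiller, cast_eq]
  rw [S.face_comm_mixed M q r hqr j (k + 1) hq (by omega) hj (by omega),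
    he M q r j k hqr hq hj hk]

end MTprops

theorem multi_first_horn_compatible_general (ℓ : ℕ)
    (S : MultiSemisimplicialSet ℓ)
    (T : (m : Fin ℓ → ℕ) → (q : Fin ℓ) → ℕ → S.X ((m - uv q) - uv q) → S.X m)
    (hT : MTprops S T)
    (m : Fin ℓ → ℕ) (r : Fin ℓ) (k : ℕ) (hk : k + 1 ≤ m r)
    (x : S.X (m - uv r))
    (y : (q : Fin ℓ) → ℕ → S.X (m - uv q))
    (hy0 : y r 0 = x)
    (hyl : ∀ j : ℕ, 0 < j → j < k + 1 →
        y r j = S.d m r k (T m r (k - 1) (S.d (m - uv r) r (j - 1) x)))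
    (hyh : ∀ j : ℕ, k + 1 < j → j ≤ m r →
        y r j = S.d m r (k + 1) (T m r k (S.d (m - uv r) r (j - 1) x)))
    (hyq : ∀ (q : Fin ℓ) (j : ℕ) (hqr : q ≠ r), 1 ≤ m q → j ≤ m q →
        y q j = cast (congrArg S.X (addsub2 m r q hqr))
          (S.d ((m + uv r) - uv q) r (k + 1)
            (T ((m + uv r) - uv q) r k
              (cast (congrArg S.X (addsub1 m r q hqr)) (S.d (m - uv r) q j x))))) :
    (∀ (p : Fin ℓ) (i j : ℕ), i < j → j ≤ m p → 2 ≤ m p →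
        ¬(p = r ∧ i = k + 1) → ¬(p = r ∧ j = k + 1) →
        S.d (m - uv p) p i (y p j) = S.d (m - uv p) p (j - 1) (y p i)) ∧
    (∀ (p q : Fin ℓ) (i j : ℕ), p ≠ q → 1 ≤ m p → 1 ≤ m q → i ≤ m p → j ≤ m q →
        ¬(p = r ∧ i = k + 1) → ¬(q = r ∧ j = k + 1) →
        S.d (m - uv q) p i (y q j) =
          cast (congrArg S.X (sub_sub_comm' m (uv p) (uv q))) (S.d (m - uv p) q j (y p i))) := by
  have hMr : k + 2 ≤ (m + uv r) r := by rw [add_uv_apply_self]; omega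
  refine S.isCompatibleFamily_of_eq_faces r (k + 1)
    (S.firstHornFiller T r k (add_uv_sub_uv m r) x) fun q j hq hj hqj => ?_
  by_cases hqr : q = r
  · subst hqr
    rcases Nat.lt_trichotomy j (k + 1) with hlt | heq | hgt
    · rcases Nat.eq_zero_or_pos j with rfl | hj0
      · rw [hy0, hT.firstHornFiller_face_zero hMr]
      · rw [hyl j hj0 hlt, hT.firstHornFiller_face_of_lt hj0 hlt hMr]
    · exact absurd ⟨rfl, heq⟩ hqj
    · rw [hyh j hgt hj, hT.firstHornFiller_face_of_gt hgt
      (by rw [add_uv_apply_self]; omega)]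
  · rw [hyq q j hqr hq hj, hT.firstHornFiller_face_of_ne hqr
      (by rwa [add_uv_apply_of_ne m hqr]) (by rwa [add_uv_apply_of_ne m hqr]) hMr
      (addsub1 m r q hqr) (addsub2 m r q hqr)]

/-- The multisemisimplicial analogue of Lemma 4: the prescribed faces `y q j` of the
first auxiliary horn (with missing face `(r, k+1)`, filler degree `m = 𝐧 + 𝐞 r`)
are Kan-compatible. -/
theorem multi_first_horn_compatible (ℓ : ℕ) (hl : 1 ≤ ℓ)
    (S : MultiSemisimplicialSet ℓ)
    (T : (m : Fin ℓ → ℕ) → (q : Fin ℓ) → ℕ → S.X ((m - uv q) - uv q) → S.X m)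
    (hT : MTprops S T)
    (m : Fin ℓ → ℕ) (r : Fin ℓ) (k : ℕ) (hk : k + 1 ≤ m r)
    (x : S.X (m - uv r))
    (y : (q : Fin ℓ) → ℕ → S.X (m - uv q))
    (hy0 : y r 0 = x)
    (hyl : ∀ j : ℕ, 0 < j → j < k + 1 →
        y r j = S.d m r k (T m r (k - 1) (S.d (m - uv r) r (j - 1) x)))
    (hyh : ∀ j : ℕ, k + 1 < j → j ≤ m r →
        y r j = S.d m r (k + 1) (T m r k (S.d (m - uv r) r (j - 1) x)))
    (hyq : ∀ (q : Fin ℓ) (j : ℕ) (hqr : q ≠ r), 1 ≤ m q → j ≤ m q →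
        y q j = cast (congrArg S.X (addsub2 m r q hqr))
          (S.d ((m + uv r) - uv q) r (k + 1)
            (T ((m + uv r) - uv q) r k
              (cast (congrArg S.X (addsub1 m r q hqr)) (S.d (m - uv r) q j x))))) :
    (∀ (p : Fin ℓ) (i j : ℕ), i < j → j ≤ m p → 2 ≤ m p →
        ¬(p = r ∧ i = k + 1) → ¬(p = r ∧ j = k + 1) →
        S.d (m - uv p) p i (y p j) = S.d (m - uv p) p (j - 1) (y p i)) ∧
    (∀ (p q : Fin ℓ) (i j : ℕ), p ≠ q → 1 ≤ m p → 1 ≤ m q → i ≤ m p → j ≤ m q →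
        ¬(p = r ∧ i = k + 1) → ¬(q = r ∧ j = k + 1) →
        S.d (m - uv q) p i (y q j) =
          cast (congrArg S.X (sub_sub_comm' m (uv p) (uv q))) (S.d (m - uv p) q j (y p i))) :=
  multi_first_horn_compatible_general ℓ S T hT m r k hk x y hy0 hyl hyh hyq
end
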